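/- arXiv:1507.04727 — 2 statements merged into one kernel-verified Lean document; each statement's English description precedes it below -/
import Mathlib

section
/- Let x_1, …, x_{KW} ∈ ℝ^M be deterministic covariate vectors, n_1, …, n_{KW} ∈ {0,1}, and let ω, Δ ∈ ℝ^M. Suppose that for all t = 1,…,KW and all τ ∈ [0,1], p_min ≤ logistic(⟨x_t, ω + τΔ⟩) ≤ p_max, where 0 < p_min ≤ p_max < 1. Then the Bregman-type divergence of the negative exponentially weighted log-likelihood satisfies D(Δ, ω) := −L^β(ω+Δ) + L^β(ω) + ⟨Δ, ∇L^β(ω)⟩ ≥ (1/2)·p_min·(1−p_max)·Σ_{i=1}^K Σ_{j=1}^W β^{K−i} ⟨x_{(i−1)W+j}, Δ⟩². -/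
/-
Up to terms linear in `ω`, each summand of `-L^β` is the softplus `u ↦ log (1 + eᵘ)` evaluated
at `⟪x_t, ω⟫`, so the Bregman divergence is a `β`-weighted sum of one-dimensional divergences
`softplus (u + a) - softplus u - a * logistic u` with `u = ⟪x_t, ω⟫`, `a = ⟪x_t, Δ⟫`.
Since `softplus'' = logistic * (1 - logistic) ≥ p_min (1 - p_max)` along the segment, the
second-order Taylor bound makes each of them at least `p_min (1 - p_max) a² / 2`.
-/

open scoped RealInnerProductSpace BigOperators

/-- The logistic function `u ↦ eᵘ/(1+eᵘ)`. -/
noncomputable def logistic (u : ℝ) : ℝ := Real.exp u / (1 + Real.exp u)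

/-- The exponentially weighted log-likelihood. -/
noncomputable def Lbeta (M K W : ℕ) (β : ℝ)
    (x : ℕ → EuclideanSpace ℝ (Fin M)) (n : ℕ → ℝ)
    (ω : EuclideanSpace ℝ (Fin M)) : ℝ :=
  ∑ i ∈ Finset.Icc 1 K, ∑ j ∈ Finset.Icc 1 W,
    β ^ (K - i) * (n ((i - 1) * W + j) * ⟪x ((i - 1) * W + j), ω⟫ -
      Real.log (1 + Real.exp ⟪x ((i - 1) * W + j), ω⟫))

open Set

lemma half_le_sub_sub_deriv_of_le_deriv₂ {φ φ' φ'' : ℝ → ℝ} {m : ℝ}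
    (hφ : ∀ t, HasDerivAt φ (φ' t) t) (hφ' : ∀ t, HasDerivAt φ' (φ'' t) t)
    (hm : ∀ t ∈ Icc (0 : ℝ) 1, m ≤ φ'' t) :
    m / 2 ≤ φ 1 - φ 0 - φ' 0 := by
  have hslope_deriv (t : ℝ) : HasDerivAt (fun t => φ' t - t * m) (φ'' t - m) t :=
    (hφ' t).sub (hasDerivAt_mul_const m)
  have hslope : MonotoneOn (fun t => φ' t - t * m) (Icc 0 1) :=
    monotoneOn_of_hasDerivWithinAt_nonneg (convex_Icc 0 1)
      (fun t _ => (hslope_deriv t).continuousAt.continuousWithinAt)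
      (fun t _ => (hslope_deriv t).hasDerivWithinAt)
      (fun t ht => sub_nonneg.2 (hm t (interior_subset ht)))
  have hgap_deriv (t : ℝ) : HasDerivAt (fun t => φ t - t * φ' 0 - m / 2 * t ^ 2)
      (φ' t - φ' 0 - t * m) t :=
    (((hφ t).sub (hasDerivAt_mul_const (φ' 0))).sub
      ((hasDerivAt_pow 2 t).const_mul (m / 2))).congr_deriv (by norm_num; ring)
  have hgap : MonotoneOn (fun t => φ t - t * φ' 0 - m / 2 * t ^ 2) (Icc 0 1) := by
    refine monotoneOn_of_hasDerivWithinAt_nonneg (convex_Icc 0 1)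
      (fun t _ => (hgap_deriv t).continuousAt.continuousWithinAt)
      (fun t _ => (hgap_deriv t).hasDerivWithinAt) (fun t ht => ?_)
    have := hslope (left_mem_Icc.2 zero_le_one) (interior_subset ht) (interior_subset ht).1
    simp only [zero_mul, sub_zero] at this
    linarith
  have := hgap (left_mem_Icc.2 zero_le_one) (right_mem_Icc.2 zero_le_one) zero_le_one
  simp only [mul_zero, mul_one, sub_zero, one_pow, zero_pow two_ne_zero] at this
  linarith

lemma logistic_eq_sigmoid : logistic = Real.sigmoid := by
  ext u
  rw [logistic, Real.sigmoid_def, Real.exp_neg]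
  field_simp
  ring

lemma hasDerivAt_logistic (u : ℝ) :
    HasDerivAt logistic (logistic u * (1 - logistic u)) u := by
  simpa only [logistic_eq_sigmoid] using Real.hasDerivAt_sigmoid u

noncomputable def softplus (u : ℝ) : ℝ := Real.log (1 + Real.exp u)

lemma hasDerivAt_softplus (u : ℝ) : HasDerivAt softplus (logistic u) u :=
  ((Real.hasDerivAt_exp u).const_add 1).log (by positivity)

lemma half_mul_sq_le_softplus_sub_sub {c u a : ℝ}
    (hc : ∀ τ ∈ Icc (0 : ℝ) 1, c ≤ logistic (u + τ * a) * (1 - logistic (u + τ * a))) :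
    1 / 2 * c * a ^ 2 ≤ softplus (u + a) - softplus u - a * logistic u := by
  have hline (τ : ℝ) : HasDerivAt (fun τ => u + τ * a) a τ := by
    simpa using ((hasDerivAt_id τ).mul_const a).const_add u
  have key := half_le_sub_sub_deriv_of_le_deriv₂ (m := a ^ 2 * c)
    (φ := fun τ => softplus (u + τ * a)) (φ' := fun τ => logistic (u + τ * a) * a)
    (fun τ => (hasDerivAt_softplus _).comp τ (hline τ))
    (fun τ => ((hasDerivAt_logistic _).comp τ (hline τ)).mul_const a)
    (fun τ hτ => by nlinarith [hc τ hτ, sq_nonneg a])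
  simp only [zero_mul, add_zero, one_mul] at key
  linarith

section Lbeta

variable (M K W : ℕ) (β : ℝ) (x : ℕ → EuclideanSpace ℝ (Fin M)) (n : ℕ → ℝ)
  (ω Δ : EuclideanSpace ℝ (Fin M))

lemma hasFDerivAt_Lbeta :
    HasFDerivAt (Lbeta M K W β x n)
      (∑ i ∈ Finset.Icc 1 K, ∑ j ∈ Finset.Icc 1 W,
        (β ^ (K - i) * (n ((i - 1) * W + j) - logistic ⟪x ((i - 1) * W + j), ω⟫)) •
          innerSL ℝ (x ((i - 1) * W + j))) ω := by
  refine HasFDerivAt.fun_sum fun i _ => HasFDerivAt.fun_sum fun j _ => ?_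
  set v := x ((i - 1) * W + j)
  have hlin : HasFDerivAt (fun y => ⟪v, y⟫) (innerSL ℝ v) ω := (innerSL ℝ v).hasFDerivAt
  have hterm := ((hlin.const_mul (n ((i - 1) * W + j))).sub
    ((hasDerivAt_softplus ⟪v, ω⟫).comp_hasFDerivAt ω hlin)).const_mul (β ^ (K - i))
  refine hterm.congr_fderiv ?_
  ext y
  simp only [_root_.smul_apply, _root_.sub_apply, smul_eq_mul]
  ring

lemma inner_gradient_Lbeta :
    ⟪Δ, gradient (Lbeta M K W β x n) ω⟫ =
      ∑ i ∈ Finset.Icc 1 K, ∑ j ∈ Finset.Icc 1 W, β ^ (K - i) *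
        ((n ((i - 1) * W + j) - logistic ⟪x ((i - 1) * W + j), ω⟫) *
          ⟪x ((i - 1) * W + j), Δ⟫) := by
  rw [real_inner_comm, inner_gradient_left, (hasFDerivAt_Lbeta M K W β x n ω).fderiv]
  simp only [FunLike.coe_sum, Finset.sum_apply, _root_.smul_apply,
    innerSL_apply_apply, smul_eq_mul, mul_assoc]

lemma bregman_neg_Lbeta_eq :
    -(Lbeta M K W β x n (ω + Δ)) + Lbeta M K W β x n ω + ⟪Δ, gradient (Lbeta M K W β x n) ω⟫ =
      ∑ i ∈ Finset.Icc 1 K, ∑ j ∈ Finset.Icc 1 W, β ^ (K - i) *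
        (softplus (⟪x ((i - 1) * W + j), ω⟫ + ⟪x ((i - 1) * W + j), Δ⟫) -
          softplus ⟪x ((i - 1) * W + j), ω⟫ -
          ⟪x ((i - 1) * W + j), Δ⟫ * logistic ⟪x ((i - 1) * W + j), ω⟫) := by
  simp only [inner_gradient_Lbeta, Lbeta, ← Finset.sum_neg_distrib, ← Finset.sum_add_distrib,
    inner_add_right]
  exact Finset.sum_congr rfl fun i _ => Finset.sum_congr rfl fun j _ => by
    rw [softplus, softplus]
    ring

lemma le_mul_one_sub_self {a b p : ℝ} (ha : 0 ≤ a) (hap : a ≤ p) (hpb : p ≤ b) (hb : b ≤ 1) :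
    a * (1 - b) ≤ p * (1 - p) := by
  nlinarith

lemma window_index_mem_Icc {K W i j : ℕ} (hi : i ∈ Finset.Icc 1 K) (hj : j ∈ Finset.Icc 1 W) :
    1 ≤ (i - 1) * W + j ∧ (i - 1) * W + j ≤ K * W := by
  rw [Finset.mem_Icc] at hi hj
  refine ⟨le_add_left hj.1, ?_⟩
  calc (i - 1) * W + j ≤ (i - 1 + 1) * W := by rw [add_one_mul]; omega
    _ ≤ K * W := Nat.mul_le_mul_right W (by omega)

theorem stmt3_general (M K W : ℕ) (β : ℝ) (hβ0 : 0 < β)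
    (x : ℕ → EuclideanSpace ℝ (Fin M)) (n : ℕ → ℝ)
    (ω Δ : EuclideanSpace ℝ (Fin M)) (pmin pmax : ℝ)
    (hp0 : 0 < pmin) (hp1 : pmax < 1)
    (hmid : ∀ t, 1 ≤ t → t ≤ K * W → ∀ τ : ℝ, 0 ≤ τ → τ ≤ 1 →
      pmin ≤ logistic ⟪x t, ω + τ • Δ⟫ ∧ logistic ⟪x t, ω + τ • Δ⟫ ≤ pmax) :
    (1 / 2) * pmin * (1 - pmax) *
        ∑ i ∈ Finset.Icc 1 K, ∑ j ∈ Finset.Icc 1 W,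
          β ^ (K - i) * ⟪x ((i - 1) * W + j), Δ⟫ ^ 2 ≤
      -(Lbeta M K W β x n (ω + Δ)) + Lbeta M K W β x n ω +
        ⟪Δ, gradient (Lbeta M K W β x n) ω⟫ := by
  rw [bregman_neg_Lbeta_eq, Finset.mul_sum]
  refine Finset.sum_le_sum fun i hi => ?_
  rw [Finset.mul_sum]
  refine Finset.sum_le_sum fun j hj => ?_
  obtain ⟨ht1, ht2⟩ := window_index_mem_Icc hi hj
  set t := (i - 1) * W + j
  have hcurv : ∀ τ ∈ Icc (0 : ℝ) 1, pmin * (1 - pmax) ≤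
      logistic (⟪x t, ω⟫ + τ * ⟪x t, Δ⟫) * (1 - logistic (⟪x t, ω⟫ + τ * ⟪x t, Δ⟫)) := by
    intro τ hτ
    obtain ⟨hlo, hhi⟩ := hmid t ht1 ht2 τ hτ.1 hτ.2
    rw [inner_add_right, real_inner_smul_right] at hlo hhi
    exact le_mul_one_sub_self hp0.le hlo hhi hp1.le
  calc 1 / 2 * pmin * (1 - pmax) * (β ^ (K - i) * ⟪x t, Δ⟫ ^ 2)
      = β ^ (K - i) * (1 / 2 * (pmin * (1 - pmax)) * ⟪x t, Δ⟫ ^ 2) := by ring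
    _ ≤ _ := mul_le_mul_of_nonneg_left (half_mul_sq_le_softplus_sub_sub hcurv)
      (pow_pos hβ0 _).le

/-- if `p_min ≤ logistic⟨x_t, ω + τΔ⟩ ≤ p_max` for all `t = 1,…,KW` and
all `τ ∈ [0,1]`, then the Bregman-type divergence of the negative exponentially
weighted log-likelihood satisfies
`D(Δ,ω) := −L^β(ω+Δ) + L^β(ω) + ⟨Δ, ∇L^β(ω)⟩
  ≥ (1/2)·p_min·(1−p_max)·Σ_{i=1}^K Σ_{j=1}^W β^{K−i} ⟨x_{(i−1)W+j}, Δ⟩²`. -/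
theorem stmt3 (M K W : ℕ) (hW : 1 ≤ W) (β : ℝ) (hβ0 : 0 < β) (hβ1 : β ≤ 1)
    (x : ℕ → EuclideanSpace ℝ (Fin M)) (n : ℕ → ℝ)
    (hn : ∀ t, 1 ≤ t → t ≤ K * W → n t = 0 ∨ n t = 1)
    (ω Δ : EuclideanSpace ℝ (Fin M)) (pmin pmax : ℝ)
    (hp0 : 0 < pmin) (hpp : pmin ≤ pmax) (hp1 : pmax < 1)
    (hmid : ∀ t, 1 ≤ t → t ≤ K * W → ∀ τ : ℝ, 0 ≤ τ → τ ≤ 1 →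
      pmin ≤ logistic ⟪x t, ω + τ • Δ⟫ ∧ logistic ⟪x t, ω + τ • Δ⟫ ≤ pmax) :
    (1 / 2) * pmin * (1 - pmax) *
        ∑ i ∈ Finset.Icc 1 K, ∑ j ∈ Finset.Icc 1 W,
          β ^ (K - i) * ⟪x ((i - 1) * W + j), Δ⟫ ^ 2 ≤
      -(Lbeta M K W β x n (ω + Δ)) + Lbeta M K W β x n ω +
        ⟪Δ, gradient (Lbeta M K W β x n) ω⟫ :=
  stmt3_general M K W β hβ0 x n ω Δ pmin pmax hp0 hp1 hmid
end Lbeta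
end

section
/- For every pair of distinct indices m, m' ∈ {2, …, M} with m ≠ m' and every t > 0, the off-diagonal entries of the weighted empirical covariance matrix C_β, despite the dependence induced by the Toeplitz shift structure of the covariates, satisfy P( |(C_β)_{m,m'}| > t ) ≤ 4 exp( −N_β t² σ⁴ / (8 B⁴) ). -/
open MeasureTheory ProbabilityTheory
open scoped BigOperators

/-- Entry `m` of the covariate vector `x_t = (σ, s_{t−M+2}, …, s_t)'` (first entry
equal to `σ`): for `m = 0` it is `σ`, and for `m ≥ 1` it is `s_{t−M+(m+1)}`. -/
noncomputable def covEntry {Ω : Type*} (M : ℕ) (σR : ℝ) (s : ℤ → Ω → ℝ)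
    (t : ℤ) (m : Fin M) (ωb : Ω) : ℝ :=
  if (m : ℕ) = 0 then σR else s (t - M + (m : ℕ) + 1) ωb

/-- `N_β := W(1−β^{K+1})/(1−β)`. -/
noncomputable def Nbeta (K W : ℕ) (β : ℝ) : ℝ := W * (1 - β ^ (K + 1)) / (1 - β)

/-- The `(m,m')` entry of the weighted empirical covariance matrix
`C_β := (1/(σ²N_β)) Σ_{i=1}^K Σ_{j=1}^W β^{K−i} x_{(i−1)W+j} x'_{(i−1)W+j}`. -/
noncomputable def Cbeta {Ω : Type*} (M K W : ℕ) (β σR : ℝ) (s : ℤ → Ω → ℝ)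
    (m m' : Fin M) (ωb : Ω) : ℝ :=
  (1 / (σR ^ 2 * Nbeta K W β)) *
    ∑ i ∈ Finset.Icc 1 K, ∑ j ∈ Finset.Icc 1 W,
      β ^ (K - i) * (covEntry M σR s (((i - 1) * W + j : ℕ) : ℤ) m ωb *
        covEntry M σR s (((i - 1) * W + j : ℕ) : ℤ) m' ωb)

open Real Finset
open scoped NNReal

/-! Write `τ = (i - 1) W + j - 1`. For `0 < m < m'` (0-based, as `Fin M`) the entry
`(C_β)_{m,m'}` is `(σ² N_β)⁻¹ ∑_τ w_τ s_{τ+a} s_{τ+a+L}` with `a = m + 2 - M`, `L = m' - m` and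
weights `w_τ = β^{K-i} ∈ (0, 1]`.
Each product is centred and bounded by `B²`, hence sub-Gaussian with parameter `w_τ² B⁴` by
Hoeffding's lemma. Two products whose indices `τ` have `⌊τ / L⌋` of the same parity involve
disjoint pairs of the `s_t`, so each parity class is a sum of independent sub-Gaussian terms.
Adding the two (dependent) classes at most doubles the variance proxy, and `∑_τ w_τ² ≤ N_β`,
so the Chernoff bound gives the claim. -/

lemma Finset.sum_Icc_one_eq_sum_range {M : Type*} [AddCommMonoid M] (f : ℕ → M) (n : ℕ) :
    ∑ i ∈ Icc 1 n, f i = ∑ i ∈ range n, f (i + 1) := by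
  rw [← Ico_add_one_right_eq_Icc, sum_Ico_eq_sum_range, Nat.add_sub_cancel]
  simp only [add_comm 1]

lemma Finset.sum_range_mul_eq_sum_sum {M : Type*} [AddCommMonoid M] (K W : ℕ)
    (g : ℕ → ℕ → M) :
    ∑ τ ∈ range (K * W), g (τ / W) τ = ∑ i ∈ range K, ∑ j ∈ range W, g i (i * W + j) := by
  induction K with
  | zero => simp
  | succ K ih =>
    rw [Nat.succ_mul, sum_range_add, ih, sum_range_succ]
    congr 1
    refine sum_congr rfl fun j hj ↦ ?_
    have hjW : j < W := mem_range.1 hj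
    rw [add_comm, Nat.add_mul_div_right _ _ (by omega), Nat.div_eq_of_lt hjW, zero_add, add_comm]

namespace ProbabilityTheory

variable {Ω : Type*} {mΩ : MeasurableSpace Ω} {μ : Measure Ω} {X Y : Ω → ℝ}

lemma HasSubgaussianMGF.mono {c d : ℝ≥0} (h : HasSubgaussianMGF X c μ) (hcd : c ≤ d) :
    HasSubgaussianMGF X d μ where
  integrable_exp_mul := h.integrable_exp_mul
  mgf_le t := (h.mgf_le t).trans <| exp_le_exp.2 <| by gcongr

lemma HasSubgaussianMGF.add_two_mul {cX cY : ℝ≥0} (hX : HasSubgaussianMGF X cX μ)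
    (hY : HasSubgaussianMGF Y cY μ) :
    HasSubgaussianMGF (fun ω ↦ X ω + Y ω) (2 * (cX + cY)) μ :=
  (hX.add hY).mono <| by simpa [NNReal.sq_sqrt] using add_sq_le (a := cX.sqrt) (b := cY.sqrt)

lemma HasSubgaussianMGF.measureReal_abs_ge_le {c : ℝ≥0} (h : HasSubgaussianMGF X c μ) {ε : ℝ}
    (hε : 0 ≤ ε) : μ.real {ω | ε ≤ |X ω|} ≤ 2 * exp (-ε ^ 2 / (2 * c)) := by
  have hsplit : {ω | ε ≤ |X ω|} = {ω | ε ≤ X ω} ∪ {ω | ε ≤ (-X) ω} := by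
    ext ω; simp only [Set.mem_ofPred_eq, Set.mem_union, Pi.neg_apply, le_abs]
  rw [hsplit]
  calc _ ≤ μ.real {ω | ε ≤ X ω} + μ.real {ω | ε ≤ (-X) ω} := measureReal_union_le _ _
    _ ≤ _ := by linarith [h.measure_ge_le hε, h.neg.measure_ge_le hε]

lemma hasSubgaussianMGF_mul_of_indepFun [IsProbabilityMeasure μ] {a b : ℝ≥0}
    (hXY : X ⟂ᵢ[μ] Y) (hXm : AEMeasurable X μ) (hYm : AEMeasurable Y μ)
    (hXa : ∀ᵐ ω ∂μ, |X ω| ≤ a) (hYb : ∀ᵐ ω ∂μ, |Y ω| ≤ b) (hX0 : μ[X] = 0) :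
    HasSubgaussianMGF (fun ω ↦ X ω * Y ω) ((a * b) ^ 2) μ := by
  have hmean : μ[fun ω ↦ X ω * Y ω] = 0 := by
    rw [show (fun ω ↦ X ω * Y ω) = X * Y from rfl,
      hXY.integral_mul_eq_mul_integral hXm.aestronglyMeasurable hYm.aestronglyMeasurable,
      hX0, zero_mul]
  have hbd : ∀ᵐ ω ∂μ, X ω * Y ω ∈ Set.Icc (-(a * b : ℝ)) (a * b) := by
    filter_upwards [hXa, hYb] with ω hX hY
    rw [Set.mem_Icc, ← abs_le, abs_mul]
    exact mul_le_mul hX hY (abs_nonneg _) a.2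
  have hparam : ‖(a * b : ℝ) - -(a * b)‖₊ / 2 = a * b := by
    rw [sub_neg_eq_add, ← two_mul, nnnorm_mul, Real.nnnorm_two, mul_div_cancel_left₀ _ two_ne_zero]
    ext
    simp
  rw [← hparam]
  exact hasSubgaussianMGF_of_mem_Icc_of_integral_eq_zero (hXm.mul hYm) hbd hmean

lemma iIndepFun.indepFun_of_measurable_iSup {ι : Type*} {β : ι → Type*}
    {mβ : ∀ i, MeasurableSpace (β i)} {f : ∀ i, Ω → β i} (hf : iIndepFun f μ)
    (hfm : ∀ i, Measurable (f i)) {S T : Set ι} (hST : Disjoint S T)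
    (hX : Measurable[⨆ i ∈ S, (mβ i).comap (f i)] X)
    (hY : Measurable[⨆ i ∈ T, (mβ i).comap (f i)] Y) : X ⟂ᵢ[μ] Y :=
  (IndepFun_iff_Indep X Y μ).2 <| indep_of_indep_of_le
    (indep_iSup_of_disjoint (fun i ↦ (hfm i).comap_le) hf.iIndep hST) hX.comap_le hY.comap_le

lemma iIndepFun.hasSubgaussianMGF_sum {ι κ : Type*} {β : ι → Type*}
    {mβ : ∀ i, MeasurableSpace (β i)} {f : ∀ i, Ω → β i} (hf : iIndepFun f μ)
    (hfm : ∀ i, Measurable (f i)) {S : κ → Set ι} {T : Finset κ}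
    (hS : (T : Set κ).PairwiseDisjoint S) {X : κ → Ω → ℝ} {c : κ → ℝ≥0}
    (hXm : ∀ p ∈ T, Measurable[⨆ i ∈ S p, (mβ i).comap (f i)] (X p))
    (hX : ∀ p ∈ T, HasSubgaussianMGF (X p) (c p) μ) :
    HasSubgaussianMGF (fun ω ↦ ∑ p ∈ T, X p ω) (∑ p ∈ T, c p) μ := by
  classical
  induction T using Finset.induction_on with
  | empty =>
    have := hf.isProbabilityMeasure
    simp only [sum_empty]
    exact HasSubgaussianMGF.fun_zero
  | insert p T hpT ih =>
    simp only [Finset.sum_insert hpT]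
    have hST : Disjoint (S p) (⋃ q ∈ T, S q) := Set.disjoint_iUnion₂_right.2 fun q hq ↦
      hS (by simp) (by simp [hq]) (by rintro rfl; exact hpT hq)
    have hT : HasSubgaussianMGF (fun ω ↦ ∑ q ∈ T, X q ω) (∑ q ∈ T, c q) μ :=
      ih (hS.subset (by simp)) (fun q hq ↦ hXm q (by simp [hq])) (fun q hq ↦ hX q (by simp [hq]))
    refine (hX p (by simp)).add_of_indepFun hT
      (hf.indepFun_of_measurable_iSup hfm hST (hXm p (by simp)) ?_)
    refine Finset.measurable_sum _ fun q hq ↦ (hXm q (by simp [hq])).mono ?_ le_rfl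
    exact biSup_mono fun i hi ↦ Set.mem_biUnion hq hi

end ProbabilityTheory

lemma Cbeta_comm {Ω : Type*} (M K W : ℕ) (β σR : ℝ) (s : ℤ → Ω → ℝ) (m m' : Fin M) :
    Cbeta M K W β σR s m m' = Cbeta M K W β σR s m' m := by
  ext ω
  simp only [Cbeta, mul_comm (covEntry M σR s _ m ω)]

lemma Cbeta_eq_sum_range {Ω : Type*} (M K W : ℕ) (β σR : ℝ) (s : ℤ → Ω → ℝ) {m m' : Fin M}
    (hm : (m : ℕ) ≠ 0) (hm' : (m' : ℕ) ≠ 0) (ω : Ω) :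
    Cbeta M K W β σR s m m' ω = 1 / (σR ^ 2 * Nbeta K W β) *
      ∑ τ ∈ range (K * W), β ^ (K - (τ / W + 1)) *
        (s (τ + ((m : ℤ) + 2 - M)) ω * s (τ + ((m' : ℤ) + 2 - M)) ω) := by
  rw [Cbeta, sum_range_mul_eq_sum_sum (g := fun i τ ↦ β ^ (K - (i + 1)) *
    (s (τ + ((m : ℤ) + 2 - M)) ω * s (τ + ((m' : ℤ) + 2 - M)) ω)), sum_Icc_one_eq_sum_range]
  simp only [sum_Icc_one_eq_sum_range, covEntry, hm, hm', if_false, Nat.add_sub_cancel]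
  congr! 5 with i _ j _ <;> (congr 1; push_cast; ring)

lemma sum_range_sq_pow_le_Nbeta {K W : ℕ} {β : ℝ} (hβ0 : 0 ≤ β) (hβ1 : β < 1) :
    ∑ τ ∈ range (K * W), (β ^ (K - (τ / W + 1))) ^ 2 ≤ Nbeta K W β := by
  calc ∑ τ ∈ range (K * W), (β ^ (K - (τ / W + 1))) ^ 2
      ≤ ∑ τ ∈ range (K * W), β ^ (K - (τ / W + 1)) := sum_le_sum fun τ _ ↦ by
        rw [sq]; exact mul_le_of_le_one_left (by positivity) (pow_le_one₀ hβ0 hβ1.le)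
    _ = W * ∑ i ∈ range K, β ^ i := by
        rw [sum_range_mul_eq_sum_sum (g := fun i _ ↦ β ^ (K - (i + 1))),
          ← sum_range_reflect (fun i ↦ β ^ i), mul_sum]
        refine sum_congr rfl fun i hi ↦ ?_
        rw [sum_const, card_range, nsmul_eq_mul, Nat.sub_sub, add_comm 1 i]
    _ ≤ W * ∑ i ∈ range (K + 1), β ^ i := by
        refine mul_le_mul_of_nonneg_left ?_ W.cast_nonneg
        exact sum_le_sum_of_subset_of_nonneg (range_subset_range.2 K.le_succ)
          fun i _ _ ↦ pow_nonneg hβ0 i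
    _ = Nbeta K W β := by
        rw [Nbeta, geom_sum_eq hβ1.ne, mul_div_assoc, ← neg_div_neg_eq, neg_sub, neg_sub]

lemma Nbeta_pos {K W : ℕ} {β : ℝ} (hW : 1 ≤ W) (hβ0 : 0 ≤ β) (hβ1 : β < 1) :
    0 < Nbeta K W β := by
  have hβK : β ^ (K + 1) < 1 := pow_lt_one₀ hβ0 hβ1 K.succ_ne_zero
  have hW' : (0 : ℝ) < W := by exact_mod_cast hW
  exact div_pos (mul_pos hW' (sub_pos.2 hβK)) (sub_pos.2 hβ1)

lemma disjoint_lag_pairs {L τ σ : ℕ} (a : ℤ) (hL : 0 < L) (hpar : Even (τ / L) ↔ Even (σ / L))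
    (hne : τ ≠ σ) : Disjoint ({(τ : ℤ) + a, τ + a + L} : Set ℤ) {(σ : ℤ) + a, σ + a + L} := by
  have hlag : ∀ x y : ℕ, (Even (x / L) ↔ Even (y / L)) → y ≠ x + L := by
    rintro x y hxy rfl
    rw [Nat.add_div_right _ hL, Nat.even_add_one] at hxy
    tauto
  have h1 := hlag τ σ hpar
  have h2 := hlag σ τ hpar.symm
  simp only [Set.disjoint_insert_left, Set.disjoint_insert_right, Set.mem_insert_iff,
    Set.mem_singleton_iff, Set.disjoint_singleton]
  omega

section

variable {Ω : Type*} {mΩ : MeasurableSpace Ω} {μ : Measure Ω} [IsProbabilityMeasure μ]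

lemma hasSubgaussianMGF_sum_mul_of_pairwiseDisjoint {ι κ : Type*} {I : Set ι} {s : ι → Ω → ℝ}
    (hindep : iIndepFun (fun t : I ↦ s t) μ) (hmeas : ∀ t ∈ I, Measurable (s t)) {B : ℝ≥0}
    (hbd : ∀ t ∈ I, ∀ᵐ ω ∂μ, |s t ω| ≤ B) (hmean : ∀ t ∈ I, μ[s t] = 0)
    {A C : κ → ι} {T : Finset κ} (hI : ∀ p ∈ T, A p ∈ I ∧ C p ∈ I) (hAC : ∀ p ∈ T, A p ≠ C p)
    (hdisj : (T : Set κ).PairwiseDisjoint fun p ↦ ({A p, C p} : Set ι)) (w : κ → ℝ) :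
    HasSubgaussianMGF (fun ω ↦ ∑ p ∈ T, w p * (s (A p) ω * s (C p) ω))
      (∑ p ∈ T, ‖w p‖₊ ^ 2 * B ^ 4) μ := by
  refine hindep.hasSubgaussianMGF_sum (S := fun p ↦ Subtype.val ⁻¹' {A p, C p})
    (fun i ↦ hmeas i i.2) (fun p hp q hq hpq ↦ (hdisj hp hq hpq).preimage _) (fun p hp ↦ ?_)
    (fun p hp ↦ ?_)
  · have hmem : ∀ t (ht : t ∈ I), t = A p ∨ t = C p →
        Measurable[⨆ i ∈ Subtype.val ⁻¹' {A p, C p}, (borel ℝ).comap (s (i : I))] (s t) :=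
      fun t ht htm ↦ (comap_measurable (s t)).mono
        (le_iSup₂ (f := fun (i : I) _ ↦ (borel ℝ).comap (s i)) ⟨t, ht⟩ (by simpa using htm)) le_rfl
    exact ((hmem _ (hI p hp).1 (.inl rfl)).mul (hmem _ (hI p hp).2 (.inr rfl))).const_mul _
  · obtain ⟨hA, hC⟩ := hI p hp
    have hne : (⟨_, hA⟩ : I) ≠ ⟨_, hC⟩ := by simpa using hAC p hp
    convert (hasSubgaussianMGF_mul_of_indepFun (hindep.indepFun hne) (hmeas _ hA).aemeasurable
      (hmeas _ hC).aemeasurable (hbd _ hA) (hbd _ hC) (hmean _ hA)).const_mul (w p) using 1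
    ext
    show _ = w p ^ 2 * (((B * B) ^ 2 : ℝ≥0) : ℝ)
    simp only [NNReal.coe_mul, NNReal.coe_pow, coe_nnnorm, Real.norm_eq_abs, sq_abs]
    ring

lemma hasSubgaussianMGF_sum_mul_lag {I : Set ℤ} {s : ℤ → Ω → ℝ}
    (hindep : iIndepFun (fun t : I ↦ s t) μ) (hmeas : ∀ t ∈ I, Measurable (s t)) {B : ℝ≥0}
    (hbd : ∀ t ∈ I, ∀ᵐ ω ∂μ, |s t ω| ≤ B) (hmean : ∀ t ∈ I, μ[s t] = 0)
    {a : ℤ} {L : ℕ} (hL : 0 < L) {T : Finset ℕ} (hI : ∀ τ ∈ T, τ + a ∈ I ∧ τ + a + L ∈ I)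
    (w : ℕ → ℝ) {c : ℝ≥0} (hc : 2 * B ^ 4 * ∑ τ ∈ T, w τ ^ 2 ≤ c) :
    HasSubgaussianMGF (fun ω ↦ ∑ τ ∈ T, w τ * (s (τ + a) ω * s (τ + a + L) ω)) c μ := by
  classical
  set X : ℕ → Ω → ℝ := fun τ ω ↦ w τ * (s (τ + a) ω * s (τ + a + L) ω)
  have hclass : ∀ T' ⊆ T, (∀ τ ∈ T', ∀ σ ∈ T', (Even (τ / L) ↔ Even (σ / L))) →
      HasSubgaussianMGF (fun ω ↦ ∑ τ ∈ T', X τ ω) (∑ τ ∈ T', ‖w τ‖₊ ^ 2 * B ^ 4) μ :=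
    fun T' hT' hpar ↦ hasSubgaussianMGF_sum_mul_of_pairwiseDisjoint hindep hmeas hbd hmean
      (fun τ hτ ↦ hI τ (hT' hτ)) (fun τ _ ↦ by simp [hL.ne'])
      (fun τ hτ σ hσ hne ↦ disjoint_lag_pairs a hL (hpar τ hτ σ hσ) hne) w
  have hE := hclass (T.filter fun τ ↦ Even (τ / L)) (filter_subset _ _) fun τ hτ σ hσ ↦ by
    simp only [mem_filter] at hτ hσ; tauto
  have hO := hclass (T.filter fun τ ↦ ¬Even (τ / L)) (filter_subset _ _) fun τ hτ σ hσ ↦ by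
    simp only [mem_filter] at hτ hσ; tauto
  have hsplit : (fun ω ↦ ∑ τ ∈ T, X τ ω) = fun ω ↦ ∑ τ ∈ T.filter (fun τ ↦ Even (τ / L)), X τ ω +
      ∑ τ ∈ T.filter (fun τ ↦ ¬Even (τ / L)), X τ ω :=
    funext fun ω ↦ (sum_filter_add_sum_filter_not _ _ _).symm
  refine (hsplit ▸ hE.add_two_mul hO).mono ?_
  rw [sum_filter_add_sum_filter_not, ← NNReal.coe_le_coe]
  convert hc using 1
  push_cast [Real.norm_eq_abs, sq_abs, mul_sum]
  exact sum_congr rfl fun τ _ ↦ by ring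

lemma measureReal_lt_abs_Cbeta_le {M K W : ℕ} (hW : 1 ≤ W) {β σR B : ℝ} (hβ0 : 0 ≤ β)
    (hβ1 : β < 1) (hσ : 0 < σR) (hB : 0 < B) {s : ℤ → Ω → ℝ} (hmeas : ∀ t, Measurable (s t))
    (hindep : iIndepFun (fun t : ↥(Set.Icc (-(M : ℤ) + 1) ((K * W : ℕ) : ℤ)) => s t) μ)
    (hmean : ∀ t : ℤ, -(M : ℤ) + 1 ≤ t → t ≤ (K * W : ℕ) → ∫ ω, s t ω ∂μ = 0)
    (hbd : ∀ t : ℤ, -(M : ℤ) + 1 ≤ t → t ≤ (K * W : ℕ) → ∀ᵐ ω ∂μ, |s t ω| ≤ B)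
    {m m' : Fin M} (hm : (m : ℕ) ≠ 0) (hlt : (m : ℕ) < m') {t : ℝ} (ht : 0 < t) :
    μ.real {ω | t < |Cbeta M K W β σR s m m' ω|} ≤
      4 * exp (-(Nbeta K W β) * t ^ 2 * σR ^ 4 / (8 * B ^ 4)) := by
  set N := Nbeta K W β
  have hN : 0 < N := Nbeta_pos hW hβ0 hβ1
  set a : ℤ := (m : ℤ) + 2 - M
  set L : ℕ := m' - m
  set S : Ω → ℝ := fun ω ↦ ∑ τ ∈ range (K * W), β ^ (K - (τ / W + 1)) *
    (s (τ + a) ω * s (τ + a + L) ω)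
  have hS : HasSubgaussianMGF S (2 * B ^ 4 * N).toNNReal μ := by
    refine hasSubgaussianMGF_sum_mul_lag hindep (fun t _ ↦ hmeas t) (B := ⟨B, hB.le⟩)
      (fun t ht ↦ hbd t ht.1 ht.2) (fun t ht ↦ hmean t ht.1 ht.2) (Nat.sub_pos_of_lt hlt)
      (fun τ hτ ↦ ?_) _ ?_
    · have := mem_range.1 hτ
      have := m'.isLt
      simp only [Set.mem_Icc, a]
      omega
    · rw [Real.coe_toNNReal _ (by positivity)]
      exact mul_le_mul_of_nonneg_left (sum_range_sq_pow_le_Nbeta hβ0 hβ1) (by positivity)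
  have hC : ∀ ω, Cbeta M K W β σR s m m' ω = S ω / (σR ^ 2 * N) := fun ω ↦ by
    have hm'a : (m' : ℤ) + 2 - M = a + L := by simp only [a, L]; push_cast [hlt.le]; ring
    rw [Cbeta_eq_sum_range M K W β σR s hm (by omega) ω, hm'a, one_div_mul_eq_div]
    simp only [← add_assoc]
    rfl
  have hsub : {ω | t < |Cbeta M K W β σR s m m' ω|} ⊆ {ω | t * σR ^ 2 * N ≤ |S ω|} := by
    intro ω hω
    rw [Set.mem_ofPred_eq, hC, abs_div, abs_of_pos (show 0 < σR ^ 2 * N by positivity),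
      lt_div_iff₀ (by positivity)] at hω
    rw [Set.mem_ofPred_eq, mul_assoc]
    exact hω.le
  have hexp :
      -(t * σR ^ 2 * N) ^ 2 / (2 * (2 * B ^ 4 * N)) ≤ -N * t ^ 2 * σR ^ 4 / (8 * B ^ 4) := by
    rw [show -(t * σR ^ 2 * N) ^ 2 / (2 * (2 * B ^ 4 * N)) = -(N * t ^ 2 * σR ^ 4) / (4 * B ^ 4) by
      field_simp; ring, neg_mul, neg_mul, neg_div, neg_div, neg_le_neg_iff]
    exact div_le_div_of_nonneg_left (by positivity) (by positivity) (by linarith [pow_pos hB 4])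
  calc μ.real {ω | t < |Cbeta M K W β σR s m m' ω|}
      ≤ μ.real {ω | t * σR ^ 2 * N ≤ |S ω|} := measureReal_mono hsub
    _ ≤ 2 * exp (-(t * σR ^ 2 * N) ^ 2 / (2 * (2 * B ^ 4 * N).toNNReal)) :=
        hS.measureReal_abs_ge_le (by positivity)
    _ ≤ 4 * exp (-N * t ^ 2 * σR ^ 4 / (8 * B ^ 4)) := by
        rw [Real.coe_toNNReal _ (by positivity)]
        linarith [exp_le_exp.2 hexp, exp_pos (-N * t ^ 2 * σR ^ 4 / (8 * B ^ 4))]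

end

theorem stmt7_general {Ω : Type*} {mΩ : MeasurableSpace Ω} (μ : Measure Ω)
    [IsProbabilityMeasure μ]
    (M K W : ℕ) (hW : 1 ≤ W)
    (β σR B : ℝ) (hβ0 : 0 < β) (hβ1 : β < 1) (hσ : 0 < σR) (hB : 0 < B)
    (s : ℤ → Ω → ℝ) (hmeas : ∀ t, Measurable (s t))
    (hindep : iIndepFun
      (fun t : ↥(Set.Icc (-(M : ℤ) + 1) ((K * W : ℕ) : ℤ)) => s t) μ)
    (hmean : ∀ t : ℤ, -(M : ℤ) + 1 ≤ t → t ≤ (K * W : ℕ) → ∫ ωb, s t ωb ∂μ = 0)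
    (hbd : ∀ t : ℤ, -(M : ℤ) + 1 ≤ t → t ≤ (K * W : ℕ) → ∀ᵐ ωb ∂μ, |s t ωb| ≤ B) :
    ∀ m m' : Fin M, (m : ℕ) ≠ 0 → (m' : ℕ) ≠ 0 → m ≠ m' → ∀ t : ℝ, 0 < t →
      (μ {ωb | t < |Cbeta M K W β σR s m m' ωb|}).toReal ≤
        4 * Real.exp (-(Nbeta K W β) * t ^ 2 * σR ^ 4 / (8 * B ^ 4)) := by
  intro m m' hm hm' hne t ht
  rcases (Fin.val_injective.ne hne).lt_or_gt with hlt | hlt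
  · exact measureReal_lt_abs_Cbeta_le hW hβ0.le hβ1 hσ hB hmeas hindep hmean hbd hm hlt ht
  · rw [Cbeta_comm]
    exact measureReal_lt_abs_Cbeta_le hW hβ0.le hβ1 hσ hB hmeas hindep hmean hbd hm' hlt ht

/-- tail bound for the off-diagonal entries of the weighted empirical
covariance matrix: for distinct indices `m, m' ∈ {2,…,M}` and every `t > 0`, despite
the dependence induced by the Toeplitz shift structure of the covariates,
`P(|(C_β)_{m,m'}| > t) ≤ 4 exp(−N_β t² σ⁴ / (8B⁴))`. -/
theorem stmt7 {Ω : Type*} {mΩ : MeasurableSpace Ω} (μ : Measure Ω)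
    [IsProbabilityMeasure μ]
    (M K W : ℕ) (hM : 2 ≤ M) (hK : 1 ≤ K) (hW : 1 ≤ W)
    (β σR B : ℝ) (hβ0 : 0 < β) (hβ1 : β < 1) (hσ : 0 < σR) (hB : 0 < B)
    (s : ℤ → Ω → ℝ) (hmeas : ∀ t, Measurable (s t))
    (hindep : iIndepFun
      (fun t : ↥(Set.Icc (-(M : ℤ) + 1) ((K * W : ℕ) : ℤ)) => s t) μ)
    (hmean : ∀ t : ℤ, -(M : ℤ) + 1 ≤ t → t ≤ (K * W : ℕ) → ∫ ωb, s t ωb ∂μ = 0)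
    (hvar : ∀ t : ℤ, -(M : ℤ) + 1 ≤ t → t ≤ (K * W : ℕ) →
      ∫ ωb, (s t ωb) ^ 2 ∂μ = σR ^ 2)
    (hbd : ∀ t : ℤ, -(M : ℤ) + 1 ≤ t → t ≤ (K * W : ℕ) → ∀ᵐ ωb ∂μ, |s t ωb| ≤ B) :
    ∀ m m' : Fin M, (m : ℕ) ≠ 0 → (m' : ℕ) ≠ 0 → m ≠ m' → ∀ t : ℝ, 0 < t →
      (μ {ωb | t < |Cbeta M K W β σR s m m' ωb|}).toReal ≤
        4 * Real.exp (-(Nbeta K W β) * t ^ 2 * σR ^ 4 / (8 * B ^ 4)) :=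
  stmt7_general (mΩ := mΩ) μ M K W hW β σR B hβ0 hβ1 hσ hB s hmeas hindep hmean hbd
end
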